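/- (Theorem 4, first part: quantum Fisher information is four times the convex roof of the variance.) Let ρ be a d×d density matrix and H an Hermitian d×d matrix. (a) For every positive integer K, every probability vector (q_1,…,q_K) with all q_k > 0 and Σ_k q_k = 1, and all unit vectors η_1,…,η_K ∈ ℂ^d with Σ_k q_k |η_k⟩⟨η_k| = ρ, one has 4·Σ_k q_k V_H(η_k) ≥ F_H(ρ). (b) There exists such a finite ensemble {(q_k, η_k)} for which 4·Σ_k q_k V_H(η_k) = F_H(ρ). -/

import Mathlib

open Matrix Complex Filter Kronecker
open scoped ComplexOrder

noncomputable section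

/-- n-fold Kronecker power of a matrix, indexed by functions `Fin n → Fin d`. -/
def kronPow {d : ℕ} (X : Matrix (Fin d) (Fin d) ℂ) (n : ℕ) :
    Matrix (Fin n → Fin d) (Fin n → Fin d) ℂ :=
  Matrix.of fun i j => ∏ k, X (i k) (j k)

/-- The `n`-copy (non-interacting) Hamiltonian `Σᵢ I^{⊗(i-1)} ⊗ H ⊗ I^{⊗(n-i)}`. -/
def nCopyHam {d : ℕ} (H : Matrix (Fin d) (Fin d) ℂ) (n : ℕ) :
    Matrix (Fin n → Fin d) (Fin n → Fin d) ℂ :=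
  ∑ k : Fin n, Matrix.of fun i j =>
    H (i k) (j k) * ∏ l ∈ Finset.univ.erase k, (if i l = j l then (1 : ℂ) else 0)

/-- Time evolution unitary `e^{-iHt}`. -/
def timeEvol {m : Type*} [Fintype m] [DecidableEq m] (H : Matrix m m ℂ) (t : ℝ) :
    Matrix m m ℂ :=
  NormedSpace.exp ((-(Complex.I * (t : ℂ))) • H)

/-- Trace norm `‖A‖₁ = Tr √(AᴴA)`. -/
def traceNorm {m : Type*} [Fintype m] [DecidableEq m] (A : Matrix m m ℂ) : ℝ :=
  (((Matrix.posSemidef_conjTranspose_mul_self A).1.eigenvectorUnitary.1 *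
    diagonal (((↑) : ℝ → ℂ) ∘ (√·) ∘ (Matrix.posSemidef_conjTranspose_mul_self A).1.eigenvalues) *
    (star (Matrix.posSemidef_conjTranspose_mul_self A).1.eigenvectorUnitary : Matrix m m ℂ)).trace).re

/-- A quantum channel: a map admitting a Kraus representation. -/
def IsQuantumChannel {m n : Type*} [Fintype m] [DecidableEq m] [Fintype n] [DecidableEq n]
    (E : Matrix m m ℂ → Matrix n n ℂ) : Prop :=
  ∃ (K : ℕ) (A : Fin K → Matrix n m ℂ),
    (∀ X, E X = ∑ k, A k * X * (A k)ᴴ) ∧ (∑ k, (A k)ᴴ * A k = 1)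

/-- Time-translation invariance of a map w.r.t. input/output Hamiltonians. -/
def IsTI {m n : Type*} [Fintype m] [DecidableEq m] [Fintype n] [DecidableEq n]
    (Hin : Matrix m m ℂ) (Hout : Matrix n n ℂ)
    (E : Matrix m m ℂ → Matrix n n ℂ) : Prop :=
  ∀ (t : ℝ) (X : Matrix m m ℂ),
    timeEvol Hout t * E X * timeEvol Hout (-t) =
      E (timeEvol Hin t * X * timeEvol Hin (-t))

/-- Energy variance of a (unit) vector. -/
def varVec {m : Type*} [Fintype m] (H : Matrix m m ℂ) (ψ : m → ℂ) : ℝ :=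
  (star ψ ⬝ᵥ ((H * H) *ᵥ ψ)).re - ((star ψ ⬝ᵥ (H *ᵥ ψ)).re) ^ 2

/-- The quantum Fisher information formula for a given spectral decomposition data. -/
def qfiOf {m : Type*} [Fintype m] (H : Matrix m m ℂ) (p : m → ℝ) (φ : m → m → ℂ) : ℝ :=
  2 * ∑ j, ∑ k,
    if 0 < p j + p k then
      (p j - p k) ^ 2 / (p j + p k) * Complex.normSq (star (φ j) ⬝ᵥ (H *ᵥ φ k))
    else 0

/-- Quantum Fisher information of a Hermitian (e.g. density) matrix `ρ` w.r.t. `H`. -/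
def QFI {m : Type*} [Fintype m] [DecidableEq m] {ρ : Matrix m m ℂ}
    (hρ : ρ.IsHermitian) (H : Matrix m m ℂ) : ℝ :=
  qfiOf H hρ.eigenvalues (fun j i => hρ.eigenvectorBasis j i)

open scoped Classical in
/-- Total positive-semidefinite square root (zero on non-PSD inputs). -/
def msqrt {m : Type*} [Fintype m] [DecidableEq m] (A : Matrix m m ℂ) : Matrix m m ℂ :=
  if h : A.PosSemidef then
    h.1.eigenvectorUnitary.1 * diagonal (((↑) : ℝ → ℂ) ∘ (√·) ∘ h.1.eigenvalues) *
      (star h.1.eigenvectorUnitary : Matrix m m ℂ)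
  else 0

/-- Fidelity `Fid(ρ,σ) = (Tr √(√ρ σ √ρ))² = ‖√σ √ρ‖₁²`. -/
def fid {m : Type*} [Fintype m] [DecidableEq m] (ρ σ : Matrix m m ℂ) : ℝ :=
  (traceNorm (msqrt σ * msqrt ρ)) ^ 2

/-- Density matrix. -/
def IsDensityMatrix {m : Type*} [Fintype m] (ρ : Matrix m m ℂ) : Prop :=
  ρ.PosSemidef ∧ ρ.trace = 1


/-! In the eigenbasis of `ρ = U D Uᴴ`, `D = diagonal p`, write `A = Uᴴ H U`,
`r j l = 2 √(p j p l) / (p j + p l)` and `L = r ∘ A` (entrywise), so that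
`√D A √D = (D L + L D) / 2`. A direct computation gives `F_H(ρ) = 4 (Tr ρ H² - Tr L D L)`, while
for any ensemble `Σ q_k η_k η_kᴴ = ρ` one has `Σ q_k V_H(η_k) = Tr ρ H² - Σ q_k ⟨η_k|H|η_k⟩²`.
Writing the rotated vectors as `√D v_k`, `⟨η_k|H|η_k⟩ = Re ⟨v_k, D L v_k⟩`, and Cauchy–Schwarz for
the `D`-weighted inner product bounds its square by `⟨L v_k, D L v_k⟩`; these sum to `Tr L D L`
because `Σ q_k v_k v_kᴴ` is the projection onto the support of `D`. Equality holds when the `v_k`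
are the eigenvectors of `L`, which yields the optimal ensemble `η_k ∝ U √D u_k`. -/

namespace QFIConvexRoof

variable {n : Type*}

local notation:max "𝐃" p:max => (diagonal fun j => ((p j : ℝ) : ℂ))

section Vectors

variable [Fintype n]

theorem star_mulVec_dotProduct_mulVec (M B : Matrix n n ℂ) (x : n → ℂ) :
    star (M *ᵥ x) ⬝ᵥ (B *ᵥ (M *ᵥ x)) = star x ⬝ᵥ ((Mᴴ * B * M) *ᵥ x) := by
  rw [star_mulVec, ← dotProduct_mulVec, mulVec_mulVec, mulVec_mulVec, Matrix.mul_assoc]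

theorem star_star_dotProduct_mulVec (M : Matrix n n ℂ) (x : n → ℂ) :
    star (star x ⬝ᵥ (M *ᵥ x)) = star x ⬝ᵥ (Mᴴ *ᵥ x) := by
  rw [← star_dotProduct, star_mulVec, dotProduct_mulVec]

theorem vecMulVec_mulVec_star (M : Matrix n n ℂ) (x : n → ℂ) :
    vecMulVec (M *ᵥ x) (star (M *ᵥ x)) = M * vecMulVec x (star x) * Mᴴ := by
  rw [mul_vecMulVec, vecMulVec_mul, star_mulVec]

theorem star_smul_dotProduct_mulVec_smul (a : ℝ) (M : Matrix n n ℂ) (x : n → ℂ) :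
    star ((a : ℂ) • x) ⬝ᵥ (M *ᵥ ((a : ℂ) • x)) = ((a * a : ℝ) : ℂ) * (star x ⬝ᵥ (M *ᵥ x)) := by
  simp only [star_smul, mulVec_smul, dotProduct_smul, smul_dotProduct, smul_eq_mul, star_def,
    conj_ofReal, ofReal_mul]
  ring

theorem vecMulVec_smul_star_smul (a : ℝ) (x : n → ℂ) :
    vecMulVec ((a : ℂ) • x) (star ((a : ℂ) • x)) = ((a * a : ℝ) : ℂ) • vecMulVec x (star x) := by
  simp only [star_smul, smul_vecMulVec, vecMulVec_smul, smul_smul, star_def, conj_ofReal,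
    ofReal_mul]

theorem normSq_star_dotProduct_le (x y : n → ℂ) :
    normSq (star x ⬝ᵥ y) ≤ (star x ⬝ᵥ x).re * (star y ⬝ᵥ y).re := by
  have h := inner_mul_inner_self_le (𝕜 := ℂ) (WithLp.toLp 2 x) (WithLp.toLp 2 y)
  simp only [EuclideanSpace.inner_toLp_toLp, dotProduct_comm _ (star _)] at h
  rwa [star_dotProduct y x, norm_star, ← sq, ← Complex.normSq_eq_norm_sq] at h

theorem sum_mul_dotProduct_mulVec_eq_trace {ι : Type*} [Fintype ι] (M : Matrix n n ℂ)
    (q : ι → ℝ) (η : ι → n → ℂ) :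
    ∑ k, (q k : ℂ) * (star (η k) ⬝ᵥ (M *ᵥ η k)) =
      trace (M * ∑ k, (q k : ℂ) • vecMulVec (η k) (star (η k))) := by
  simp only [Matrix.mul_sum, Matrix.mul_smul, trace_sum, trace_smul, mul_vecMulVec,
    trace_vecMulVec, dotProduct_comm (M *ᵥ _), smul_eq_mul]

theorem sum_vecMulVec_eigenvectorBasis [DecidableEq n] {A : Matrix n n ℂ} (hA : A.IsHermitian) :
    ∑ k, vecMulVec ⇑(hA.eigenvectorBasis k) (star ⇑(hA.eigenvectorBasis k)) = 1 := by
  rw [← mem_unitaryGroup_iff.mp hA.eigenvectorUnitary.2]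
  ext a b
  simp [mul_apply, Matrix.sum_apply, vecMulVec_apply]

theorem star_eigenvectorUnitary_mul_mul_eigenvectorUnitary [DecidableEq n] {A : Matrix n n ℂ}
    (hA : A.IsHermitian) :
    star (hA.eigenvectorUnitary : Matrix n n ℂ) * A * hA.eigenvectorUnitary =
      𝐃 hA.eigenvalues := by
  have h := hA.conjStarAlgAut_star_eigenvectorUnitary
  rwa [Unitary.conjStarAlgAut_star_apply] at h

theorem _root_.Matrix.IsHermitian.star_mul_mul {H : Matrix n n ℂ} (hH : H.IsHermitian)
    (U : Matrix n n ℂ) : (star U * H * U).IsHermitian := by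
  simpa only [star_eq_conjTranspose] using isHermitian_conjTranspose_mul_mul U hH

theorem mul_star_mul_mul_mul_star [DecidableEq n] {U : Matrix n n ℂ} (hU : U ∈ unitaryGroup n ℂ)
    (M : Matrix n n ℂ) : U * (star U * M * U) * star U = M := by
  simp only [← Matrix.mul_assoc, mem_unitaryGroup_iff.mp hU, Matrix.one_mul]
  rw [Matrix.mul_assoc, mem_unitaryGroup_iff.mp hU, Matrix.mul_one]

theorem varVec_conj [DecidableEq n] {U : Matrix n n ℂ} (hU : U ∈ unitaryGroup n ℂ)
    (H : Matrix n n ℂ) (ψ : n → ℂ) :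
    varVec (U * H * star U) (U *ᵥ ψ) = varVec H ψ := by
  have hUU : star U * U = 1 := mem_unitaryGroup_iff'.mp hU
  have hconj : ∀ M : Matrix n n ℂ, Uᴴ * (U * M * star U) * U = M := fun M => by
    simpa only [star_star, ← star_eq_conjTranspose] using
      mul_star_mul_mul_mul_star (Unitary.star_mem hU) M
  have hsq : U * H * star U * (U * H * star U) = U * (H * H) * star U := by
    simp only [Matrix.mul_assoc]
    rw [← Matrix.mul_assoc (star U), hUU, Matrix.one_mul]
  simp only [varVec, hsq, star_mulVec_dotProduct_mulVec, hconj]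

end Vectors

section Normalize

variable [Fintype n] {ι : Type*}

def vecNormSq (x : n → ℂ) : ℝ := (star x ⬝ᵥ x).re

theorem ofReal_vecNormSq (x : n → ℂ) : (vecNormSq x : ℂ) = star x ⬝ᵥ x :=
  Complex.ext rfl (nonneg_iff.mp (dotProduct_star_self_nonneg x)).2

theorem vecNormSq_nonneg (x : n → ℂ) : 0 ≤ vecNormSq x :=
  (nonneg_iff.mp (dotProduct_star_self_nonneg x)).1

theorem vecNormSq_eq_zero {x : n → ℂ} : vecNormSq x = 0 ↔ x = 0 := by
  rw [← dotProduct_star_self_eq_zero, ← ofReal_vecNormSq, ofReal_eq_zero]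

theorem sum_subtype_pos_eq_sum {ι M : Type*} [Fintype ι] [AddCommMonoid M] {w : ι → ℝ}
    (f : ι → M) (hf : ∀ k, w k = 0 → f k = 0) (hw : ∀ k, 0 ≤ w k) :
    ∑ k : {k // 0 < w k}, f k = ∑ k, f k := by
  classical
  rw [← Finset.sum_subtype (Finset.univ.filter fun k => 0 < w k) (by simp),
    Finset.sum_filter_of_ne fun k _ hk => (hw k).lt_of_ne (Ne.symm (mt (hf k) hk))]

variable (ψ : ι → n → ℂ)

def normalize (k : {k // 0 < vecNormSq (ψ k)}) : n → ℂ :=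
  (((√(vecNormSq (ψ k)))⁻¹ : ℝ) : ℂ) • ψ k

theorem star_normalize_dotProduct_mulVec (M : Matrix n n ℂ) (k : {k // 0 < vecNormSq (ψ k)}) :
    star (normalize ψ k) ⬝ᵥ (M *ᵥ normalize ψ k) =
      ((vecNormSq (ψ k))⁻¹ : ℝ) * (star (ψ k) ⬝ᵥ (M *ᵥ ψ k)) := by
  rw [normalize, star_smul_dotProduct_mulVec_smul, ← mul_inv, Real.mul_self_sqrt k.2.le]

variable [Fintype ι]

structure IsPureEnsemble (ρ : Matrix n n ℂ) (q : ι → ℝ) (η : ι → n → ℂ) : Prop where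
  pos : ∀ k, 0 < q k
  sum_eq_one : ∑ k, q k = 1
  unit : ∀ k, star (η k) ⬝ᵥ η k = 1
  sum_smul_vecMulVec : ∑ k, ((q k : ℝ) : ℂ) • vecMulVec (η k) (star (η k)) = ρ

namespace IsPureEnsemble

variable {ρ : Matrix n n ℂ} {q : ι → ℝ} {η : ι → n → ℂ}

theorem nonempty (h : IsPureEnsemble ρ q η) : Nonempty ι := by
  by_contra hι
  rw [not_nonempty_iff] at hι
  simpa using h.sum_eq_one

theorem comp_equiv (h : IsPureEnsemble ρ q η) {κ : Type*} [Fintype κ] (e : κ ≃ ι) :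
    IsPureEnsemble ρ (q ∘ e) (η ∘ e) where
  pos k := h.pos (e k)
  sum_eq_one := by rw [← h.sum_eq_one, ← e.sum_comp]; rfl
  unit k := h.unit (e k)
  sum_smul_vecMulVec := by rw [← h.sum_smul_vecMulVec, ← e.sum_comp]; rfl

theorem conj [DecidableEq n] (h : IsPureEnsemble ρ q η) {U : Matrix n n ℂ}
    (hU : U ∈ unitaryGroup n ℂ) :
    IsPureEnsemble (U * ρ * star U) q (fun k => U *ᵥ η k) where
  pos := h.pos
  sum_eq_one := h.sum_eq_one
  unit k := by
    have h1 := star_mulVec_dotProduct_mulVec U 1 (η k)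
    rwa [one_mulVec, Matrix.mul_one, ← star_eq_conjTranspose, mem_unitaryGroup_iff'.mp hU,
      one_mulVec, h.unit k] at h1
  sum_smul_vecMulVec := by
    simp only [vecMulVec_mulVec_star, ← h.sum_smul_vecMulVec, Matrix.mul_sum, Matrix.sum_mul,
      Matrix.mul_smul, Matrix.smul_mul, star_eq_conjTranspose]

theorem sum_mul_varVec (h : IsPureEnsemble ρ q η) (H : Matrix n n ℂ) :
    ∑ k, q k * varVec H (η k) =
      (trace (H * H * ρ)).re - ∑ k, q k * (star (η k) ⬝ᵥ (H *ᵥ η k)).re ^ 2 := by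
  rw [← h.sum_smul_vecMulVec, ← sum_mul_dotProduct_mulVec_eq_trace, re_sum]
  simp only [varVec, mul_sub, Finset.sum_sub_distrib, re_ofReal_mul]

end IsPureEnsemble

theorem isPureEnsemble_normalize [DecidableEq n] {ρ : Matrix n n ℂ}
    (hψ : ∑ k, vecMulVec (ψ k) (star (ψ k)) = ρ) (hρ : ρ.trace = 1) :
    IsPureEnsemble ρ (fun k : {k // 0 < vecNormSq (ψ k)} => vecNormSq (ψ k)) (normalize ψ) where
  pos k := k.2
  sum_eq_one := by
    rw [sum_subtype_pos_eq_sum _ (fun _ => id) fun k => vecNormSq_nonneg _]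
    have htrace : ∑ k, (vecNormSq (ψ k) : ℂ) = ρ.trace := by
      simp only [ofReal_vecNormSq, ← hψ, trace_sum, trace_vecMulVec, dotProduct_comm (ψ _)]
    exact_mod_cast htrace.trans hρ
  unit k := by
    have h1 := star_normalize_dotProduct_mulVec ψ 1 k
    rw [one_mulVec, one_mulVec] at h1
    rw [h1, ← ofReal_vecNormSq, ← ofReal_mul, inv_mul_cancel₀ k.2.ne', ofReal_one]
  sum_smul_vecMulVec := by
    have hrank : ∀ k : {k // 0 < vecNormSq (ψ k)}, ((vecNormSq (ψ k) : ℝ) : ℂ) •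
        vecMulVec (normalize ψ k) (star (normalize ψ k)) = vecMulVec (ψ k) (star (ψ k)) :=
      fun k => by
        rw [normalize, vecMulVec_smul_star_smul, ← mul_inv, Real.mul_self_sqrt k.2.le, smul_smul,
          ← ofReal_mul, mul_inv_cancel₀ k.2.ne', ofReal_one, one_smul]
    rw [Fintype.sum_congr _ _ hrank, ← hψ]
    exact sum_subtype_pos_eq_sum (fun k => vecMulVec (ψ k) (star (ψ k)))
      (fun k hk => by simp [vecNormSq_eq_zero.mp hk]) fun k => vecNormSq_nonneg _

theorem exists_isPureEnsemble_normalize {ρ : Matrix n n ℂ}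
    (hψ : ∑ k, vecMulVec (ψ k) (star (ψ k)) = ρ) (hρ : ρ.trace = 1) (A : Matrix n n ℂ) :
    ∃ (K : ℕ) (q : Fin K → ℝ) (η : Fin K → n → ℂ), 0 < K ∧ IsPureEnsemble ρ q η ∧
      ∑ k, q k * (star (η k) ⬝ᵥ (A *ᵥ η k)).re ^ 2 =
        ∑ k, (star (ψ k) ⬝ᵥ (A *ᵥ ψ k)).re ^ 2 / vecNormSq (ψ k) := by
  classical
  set s := {k // 0 < vecNormSq (ψ k)}
  have hens := isPureEnsemble_normalize ψ hψ hρ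
  have : Nonempty s := hens.nonempty
  set e := (Fintype.equivFin s).symm
  refine ⟨Fintype.card s, _, _, Fintype.card_pos, hens.comp_equiv e, (e.sum_comp fun k =>
    vecNormSq (ψ k) * (star (normalize ψ k) ⬝ᵥ (A *ᵥ normalize ψ k)).re ^ 2).trans ?_⟩
  rw [← sum_subtype_pos_eq_sum (w := fun k => vecNormSq (ψ k))
    (fun k => (star (ψ k) ⬝ᵥ (A *ᵥ ψ k)).re ^ 2 / vecNormSq (ψ k))
      (fun k hk => by simp [hk]) fun k => vecNormSq_nonneg _]
  refine Fintype.sum_congr _ _ fun k => ?_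
  rw [star_normalize_dotProduct_mulVec, re_ofReal_mul]
  field_simp [k.2.ne']

end Normalize

section Weight

def qfiWeight (p : n → ℝ) (j l : n) : ℝ := 2 * √(p j * p l) / (p j + p l)

variable {p : n → ℝ}

theorem qfiWeight_comm (p : n → ℝ) (j l : n) : qfiWeight p j l = qfiWeight p l j := by
  rw [qfiWeight, qfiWeight, mul_comm (p j), add_comm (p j)]

theorem qfiWeight_eq_zero_of_right {l : n} (hl : p l = 0) (j : n) : qfiWeight p j l = 0 := by
  simp [qfiWeight, hl]

theorem sqrt_mul_sqrt_eq_qfiWeight {j l : n} (hj : 0 ≤ p j) (hl : 0 ≤ p l) :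
    √(p j) * √(p l) = (p j + p l) * qfiWeight p j l / 2 := by
  rcases (add_nonneg hj hl).eq_or_lt with h | h
  · simp [show p j = 0 by linarith, show p l = 0 by linarith]
  · rw [qfiWeight, ← Real.sqrt_mul hj]
    field_simp

theorem qfi_coeff_eq {j l : n} (hj : 0 ≤ p j) (hl : 0 ≤ p l) :
    (if 0 < p j + p l then (p j - p l) ^ 2 / (p j + p l) else 0) =
      (p j + p l) * (1 - qfiWeight p j l ^ 2) := by
  split_ifs with h
  · rw [qfiWeight, div_pow, mul_pow, Real.sq_sqrt (mul_nonneg hj hl)]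
    field_simp
    ring
  · simp [show p j = 0 by linarith, show p l = 0 by linarith]

/-- The solution `L` of `(D L + L D) / 2 = √D A √D` for `D = diagonal p`
(`sqrtDiagonal_mul_mul_sqrtDiagonal`); its eigenvectors give the optimal ensemble. -/
def lyapunovSolution (p : n → ℝ) (A : Matrix n n ℂ) : Matrix n n ℂ :=
  of fun j l => (qfiWeight p j l : ℂ) * A j l

theorem lyapunovSolution_isHermitian (p : n → ℝ) {A : Matrix n n ℂ} (hA : A.IsHermitian) :
    (lyapunovSolution p A).IsHermitian := by
  ext j l
  simp [lyapunovSolution, qfiWeight_comm p j l, ← hA.apply l j]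

end Weight

section Diagonal

variable [DecidableEq n] {p : n → ℝ}

def sqrtDiagonal (p : n → ℝ) : Matrix n n ℂ := diagonal fun j => (√(p j) : ℂ)

theorem sqrtDiagonal_conjTranspose (p : n → ℝ) : (sqrtDiagonal p)ᴴ = sqrtDiagonal p := by
  simp [sqrtDiagonal]

theorem diagonal_ofReal_conjTranspose (p : n → ℝ) : (𝐃 p)ᴴ = 𝐃 p := by
  simp [diagonal_conjTranspose]

variable [Fintype n]

theorem sqrtDiagonal_mul_self (hp : ∀ j, 0 ≤ p j) : sqrtDiagonal p * sqrtDiagonal p = 𝐃 p := by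
  simp only [sqrtDiagonal, diagonal_mul_diagonal, ← ofReal_mul, Real.mul_self_sqrt (hp _)]

theorem sqrtDiagonal_mul_mul_sqrtDiagonal (hp : ∀ j, 0 ≤ p j) (A : Matrix n n ℂ) :
    sqrtDiagonal p * A * sqrtDiagonal p =
      (2⁻¹ : ℂ) • (𝐃 p * lyapunovSolution p A + lyapunovSolution p A * 𝐃 p) := by
  ext j l
  have h := congrArg (fun x : ℝ => (x : ℂ)) (sqrt_mul_sqrt_eq_qfiWeight (hp j) (hp l))
  simp only [ofReal_mul, ofReal_div, ofReal_add, ofReal_ofNat] at h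
  simp only [sqrtDiagonal, lyapunovSolution, diagonal_mul, mul_diagonal, Matrix.smul_apply,
    Matrix.add_apply, of_apply, smul_eq_mul]
  linear_combination A j l * h

theorem lyapunovSolution_mul_support (hp : ∀ j, 0 ≤ p j) (A : Matrix n n ℂ) :
    lyapunovSolution p A * (sqrtDiagonal p⁻¹ * 𝐃 p * sqrtDiagonal p⁻¹) = lyapunovSolution p A := by
  ext j l
  simp only [sqrtDiagonal, diagonal_mul_diagonal, mul_diagonal, Pi.inv_apply, lyapunovSolution,
    of_apply]
  rcases (hp l).eq_or_lt with hl | hl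
  · simp [qfiWeight_eq_zero_of_right hl.symm]
  · rw [← ofReal_mul, ← ofReal_mul, mul_right_comm (√(p l)⁻¹),
      Real.mul_self_sqrt (inv_nonneg.2 hl.le), inv_mul_cancel₀ hl.ne', ofReal_one, mul_one]

-- `sqrtDiagonal p⁻¹` is the pseudo-inverse of `sqrtDiagonal p`, since `0⁻¹ = 0`.
theorem sqrtDiagonal_mulVec_sqrtDiagonal_inv_mulVec (hp : ∀ j, 0 ≤ p j) {x : n → ℂ}
    (hx : ∀ j, p j = 0 → x j = 0) : sqrtDiagonal p *ᵥ (sqrtDiagonal p⁻¹ *ᵥ x) = x := by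
  ext j
  simp only [sqrtDiagonal, mulVec_diagonal, Pi.inv_apply]
  rcases (hp j).eq_or_lt with h | h
  · simp [hx j h.symm]
  · rw [← mul_assoc, ← ofReal_mul, Real.sqrt_inv, mul_inv_cancel₀ (Real.sqrt_pos.2 h).ne',
      ofReal_one, one_mul]

theorem re_quadForm_sqrtDiagonal_mulVec (hp : ∀ j, 0 ≤ p j) {A : Matrix n n ℂ}
    (hA : A.IsHermitian) (v : n → ℂ) :
    (star (sqrtDiagonal p *ᵥ v) ⬝ᵥ (A *ᵥ (sqrtDiagonal p *ᵥ v))).re =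
      (star v ⬝ᵥ ((𝐃 p * lyapunovSolution p A) *ᵥ v)).re := by
  have hLD : star v ⬝ᵥ ((lyapunovSolution p A * 𝐃 p) *ᵥ v) =
      star (star v ⬝ᵥ ((𝐃 p * lyapunovSolution p A) *ᵥ v)) := by
    rw [star_star_dotProduct_mulVec, conjTranspose_mul, (lyapunovSolution_isHermitian p hA).eq,
      diagonal_ofReal_conjTranspose]
  rw [star_mulVec_dotProduct_mulVec, sqrtDiagonal_conjTranspose,
    sqrtDiagonal_mul_mul_sqrtDiagonal hp, smul_mulVec, add_mulVec, dotProduct_smul,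
    dotProduct_add, hLD, smul_eq_mul, star_def, add_conj, re_mul_ofReal, inv_re, re_ofNat,
    normSq_ofNat]
  ring

theorem sq_re_quadForm_sqrtDiagonal_mulVec_le (hp : ∀ j, 0 ≤ p j) {A : Matrix n n ℂ}
    (hA : A.IsHermitian) (v : n → ℂ) :
    (star (sqrtDiagonal p *ᵥ v) ⬝ᵥ (A *ᵥ (sqrtDiagonal p *ᵥ v))).re ^ 2 ≤
      (star (sqrtDiagonal p *ᵥ v) ⬝ᵥ (sqrtDiagonal p *ᵥ v)).re *
        (star v ⬝ᵥ ((lyapunovSolution p A * 𝐃 p * lyapunovSolution p A) *ᵥ v)).re := by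
  set S := sqrtDiagonal p
  set L := lyapunovSolution p A
  have hz : star v ⬝ᵥ ((𝐃 p * L) *ᵥ v) = star (S *ᵥ v) ⬝ᵥ (S *ᵥ (L *ᵥ v)) := by
    rw [star_mulVec, ← dotProduct_mulVec, mulVec_mulVec, mulVec_mulVec,
      sqrtDiagonal_conjTranspose, sqrtDiagonal_mul_self hp]
  have hLv : star (S *ᵥ (L *ᵥ v)) ⬝ᵥ (S *ᵥ (L *ᵥ v)) = star v ⬝ᵥ ((L * 𝐃 p * L) *ᵥ v) := by
    have h := star_mulVec_dotProduct_mulVec (S * L) 1 v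
    rwa [one_mulVec, ← mulVec_mulVec, conjTranspose_mul, (lyapunovSolution_isHermitian p hA).eq,
      sqrtDiagonal_conjTranspose, Matrix.mul_one, Matrix.mul_assoc L, ← Matrix.mul_assoc S,
      sqrtDiagonal_mul_self hp, ← Matrix.mul_assoc] at h
  rw [re_quadForm_sqrtDiagonal_mulVec hp hA, hz, ← hLv, sq]
  exact (re_sq_le_normSq _).trans (normSq_star_dotProduct_le _ _)

theorem re_trace_mul_self_mul_diagonal {A : Matrix n n ℂ} (hA : A.IsHermitian) (p : n → ℝ) :
    (trace (A * A * 𝐃 p)).re = ∑ j, ∑ l, p j * normSq (A j l) := by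
  have h : ∀ j l, A j l * A l j = (normSq (A j l) : ℂ) := fun j l => by
    rw [← hA.apply l j, RCLike.star_def, mul_conj]
  simp only [trace, diag_apply, mul_diagonal]
  simp only [mul_apply, h, Finset.sum_mul, re_sum, ← ofReal_mul, ofReal_re, mul_comm (p _)]

theorem re_trace_lyapunovSolution {A : Matrix n n ℂ} (hA : A.IsHermitian) (p : n → ℝ) :
    (trace (lyapunovSolution p A * 𝐃 p * lyapunovSolution p A)).re =
      ∑ j, ∑ l, p j * (qfiWeight p j l ^ 2 * normSq (A j l)) := by
  rw [trace_mul_cycle, re_trace_mul_self_mul_diagonal (lyapunovSolution_isHermitian p hA)]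
  simp [lyapunovSolution, normSq_ofReal, sq]

theorem two_mul_sum_qfi_eq (hp : ∀ j, 0 ≤ p j) {A : Matrix n n ℂ} (hA : A.IsHermitian) :
    2 * ∑ j, ∑ l, (if 0 < p j + p l then (p j - p l) ^ 2 / (p j + p l) * normSq (A j l) else 0) =
      4 * ((trace (A * A * 𝐃 p)).re -
        (trace (lyapunovSolution p A * 𝐃 p * lyapunovSolution p A)).re) := by
  set X : n → n → ℝ := fun j l => (1 - qfiWeight p j l ^ 2) * normSq (A j l)
  have hX : ∀ j l, X l j = X j l := fun j l => by
    simp only [X, qfiWeight_comm p l j, ← hA.apply j l, RCLike.star_def, normSq_conj]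
  have hsymm : ∑ j, ∑ l, p l * X j l = ∑ j, ∑ l, p j * X j l := by
    rw [Finset.sum_comm]
    simp only [hX]
  have hsummand : ∀ j l,
      (if 0 < p j + p l then (p j - p l) ^ 2 / (p j + p l) * normSq (A j l) else 0) =
        p j * X j l + p l * X j l := fun j l => by
    rw [← ite_zero_mul, qfi_coeff_eq (hp j) (hp l)]
    ring
  simp only [hsummand, Finset.sum_add_distrib]
  rw [hsymm, re_trace_mul_self_mul_diagonal hA, re_trace_lyapunovSolution hA]
  simp only [← Finset.sum_sub_distrib, ← mul_sub, X, sub_mul, one_mul]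
  ring

theorem IsPureEnsemble.apply_eq_zero_of_diagonal {ι : Type*} [Fintype ι] {q : ι → ℝ}
    {c : ι → n → ℂ} (h : IsPureEnsemble (𝐃 p) q c) {j : n} (hj : p j = 0) (k : ι) :
    c k j = 0 := by
  have hjj := congrFun (congrFun h.sum_smul_vecMulVec j) j
  simp only [Matrix.sum_apply, Matrix.smul_apply, vecMulVec_apply, Pi.star_apply,
    diagonal_apply_eq, hj, smul_eq_mul, star_def, mul_conj, ← ofReal_mul, ← ofReal_sum,
    ofReal_inj] at hjj
  have := (Finset.sum_eq_zero_iff_of_nonneg fun k _ =>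
    mul_nonneg (h.pos k).le (normSq_nonneg _)).mp hjj k (Finset.mem_univ k)
  simpa [(h.pos k).ne'] using this

theorem sum_mul_sq_re_quadForm_le (hp : ∀ j, 0 ≤ p j) {A : Matrix n n ℂ} (hA : A.IsHermitian)
    {ι : Type*} [Fintype ι] {q : ι → ℝ} {c : ι → n → ℂ} (h : IsPureEnsemble (𝐃 p) q c) :
    ∑ k, q k * (star (c k) ⬝ᵥ (A *ᵥ c k)).re ^ 2 ≤
      (trace (lyapunovSolution p A * 𝐃 p * lyapunovSolution p A)).re := by
  set L := lyapunovSolution p A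
  set v := fun k => sqrtDiagonal p⁻¹ *ᵥ c k
  have hcv : ∀ k, sqrtDiagonal p *ᵥ v k = c k := fun k =>
    sqrtDiagonal_mulVec_sqrtDiagonal_inv_mulVec hp fun j hj => h.apply_eq_zero_of_diagonal hj k
  have hv : ∑ k, (q k : ℂ) • vecMulVec (v k) (star (v k)) =
      sqrtDiagonal p⁻¹ * 𝐃 p * sqrtDiagonal p⁻¹ := by
    simp only [v, vecMulVec_mulVec_star, sqrtDiagonal_conjTranspose, ← h.sum_smul_vecMulVec,
      Matrix.mul_sum, Matrix.sum_mul, Matrix.mul_smul, Matrix.smul_mul]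
  calc ∑ k, q k * (star (c k) ⬝ᵥ (A *ᵥ c k)).re ^ 2
      ≤ ∑ k, q k * (star (v k) ⬝ᵥ ((L * 𝐃 p * L) *ᵥ v k)).re := by
        gcongr with k
        · exact (h.pos k).le
        · have := sq_re_quadForm_sqrtDiagonal_mulVec_le hp hA (v k)
          rwa [hcv, h.unit, one_re, one_mul] at this
    _ = (trace (L * 𝐃 p * L * (sqrtDiagonal p⁻¹ * 𝐃 p * sqrtDiagonal p⁻¹))).re := by
        rw [← hv, ← sum_mul_dotProduct_mulVec_eq_trace, re_sum]
        simp only [re_ofReal_mul]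
    _ = (trace (L * 𝐃 p * L)).re := by rw [Matrix.mul_assoc _ L, lyapunovSolution_mul_support hp]

theorem exists_isPureEnsemble_sum_mul_sq_re_quadForm_eq (hp : ∀ j, 0 ≤ p j)
    (hp1 : ∑ j, p j = 1) {A : Matrix n n ℂ} (hA : A.IsHermitian) :
    ∃ (K : ℕ) (q : Fin K → ℝ) (c : Fin K → n → ℂ), 0 < K ∧ IsPureEnsemble (𝐃 p) q c ∧
      ∑ k, q k * (star (c k) ⬝ᵥ (A *ᵥ c k)).re ^ 2 =
        (trace (lyapunovSolution p A * 𝐃 p * lyapunovSolution p A)).re := by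
  set L := lyapunovSolution p A
  have hL := lyapunovSolution_isHermitian p hA
  set u : n → n → ℂ := fun k => ⇑(hL.eigenvectorBasis k)
  set ψ := fun k => sqrtDiagonal p *ᵥ u k
  have hψ : ∑ k, vecMulVec (ψ k) (star (ψ k)) = 𝐃 p := by
    simp only [ψ, vecMulVec_mulVec_star, ← Matrix.sum_mul, ← Matrix.mul_sum, u,
      sum_vecMulVec_eigenvectorBasis, Matrix.mul_one, sqrtDiagonal_conjTranspose,
      sqrtDiagonal_mul_self hp]
  have htr : (𝐃 p).trace = 1 := by simp [trace_diagonal, ← ofReal_sum, hp1]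
  obtain ⟨K, q, c, hK, hens, hval⟩ := exists_isPureEnsemble_normalize ψ hψ htr A
  refine ⟨K, q, c, hK, hens, hval.trans ?_⟩
  have hLu : ∀ k, L *ᵥ u k = (hL.eigenvalues k : ℂ) • u k := fun k => by
    rw [hL.mulVec_eigenvectorBasis, RCLike.real_smul_eq_coe_smul (K := ℂ)]
    rfl
  have hterm : ∀ k, (star (ψ k) ⬝ᵥ (A *ᵥ ψ k)).re ^ 2 / vecNormSq (ψ k) =
      (star (u k) ⬝ᵥ ((L * 𝐃 p * L) *ᵥ u k)).re := fun k => by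
    have hnorm : star (ψ k) ⬝ᵥ ψ k = star (u k) ⬝ᵥ (𝐃 p *ᵥ u k) := by
      have h1 := star_mulVec_dotProduct_mulVec (sqrtDiagonal p) 1 (u k)
      rwa [one_mulVec, sqrtDiagonal_conjTranspose, Matrix.mul_one, sqrtDiagonal_mul_self hp] at h1
    have hLDL := star_mulVec_dotProduct_mulVec L (𝐃 p) (u k)
    rw [hL.eq, hLu, star_smul_dotProduct_mulVec_smul] at hLDL
    rw [vecNormSq, re_quadForm_sqrtDiagonal_mulVec hp hA, ← mulVec_mulVec, hLu, mulVec_smul,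
      dotProduct_smul, hnorm, ← hLDL, smul_eq_mul, re_ofReal_mul, re_ofReal_mul]
    rcases eq_or_ne (star (u k) ⬝ᵥ (𝐃 p *ᵥ u k)).re 0 with h0 | h0
    · simp [h0]
    · field_simp
  have htrace := sum_mul_dotProduct_mulVec_eq_trace (L * 𝐃 p * L) (fun _ => 1) u
  simp only [ofReal_one, one_mul, one_smul, u, sum_vecMulVec_eigenvectorBasis hL,
    Matrix.mul_one] at htrace
  rw [Fintype.sum_congr _ _ hterm, ← htrace, re_sum]

theorem QFI_eq {ρ H : Matrix n n ℂ} (hρ : ρ.PosSemidef) (hH : H.IsHermitian) :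
    let U : Matrix n n ℂ := hρ.isHermitian.eigenvectorUnitary
    let p := hρ.isHermitian.eigenvalues
    let A := star U * H * U
    QFI hρ.isHermitian H = 4 * ((trace (A * A * 𝐃 p)).re -
      (trace (lyapunovSolution p A * 𝐃 p * lyapunovSolution p A)).re) := by
  intro U p A
  rw [← two_mul_sum_qfi_eq hρ.eigenvalues_nonneg (hH.star_mul_mul U), QFI, qfiOf]
  simp only [mul_mul_apply]
  rfl

end Diagonal

end QFIConvexRoof

open QFIConvexRoof

theorem qfi_convex_roof
    {d : ℕ} (ρ H : Matrix (Fin d) (Fin d) ℂ)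
    (hρ : ρ.PosSemidef) (hρtr : ρ.trace = 1) (hH : H.IsHermitian) :
    (∀ (K : ℕ), 0 < K → ∀ (q : Fin K → ℝ) (η : Fin K → Fin d → ℂ),
      (∀ k, 0 < q k) → ∑ k, q k = 1 → (∀ k, star (η k) ⬝ᵥ η k = 1) →
      ∑ k, ((q k : ℝ) : ℂ) • Matrix.vecMulVec (η k) (star (η k)) = ρ →
      QFI hρ.isHermitian H ≤ 4 * ∑ k, q k * varVec H (η k)) ∧
    (∃ (K : ℕ) (q : Fin K → ℝ) (η : Fin K → Fin d → ℂ),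
      0 < K ∧ (∀ k, 0 < q k) ∧ ∑ k, q k = 1 ∧ (∀ k, star (η k) ⬝ᵥ η k = 1) ∧
      ∑ k, ((q k : ℝ) : ℂ) • Matrix.vecMulVec (η k) (star (η k)) = ρ ∧
      4 * ∑ k, q k * varVec H (η k) = QFI hρ.isHermitian H) := by
  set U : Matrix (Fin d) (Fin d) ℂ := ↑hρ.isHermitian.eigenvectorUnitary
  set p := hρ.isHermitian.eigenvalues
  set A := star U * H * U
  have hp : ∀ j, 0 ≤ p j := hρ.eigenvalues_nonneg
  have hU : U ∈ unitaryGroup (Fin d) ℂ := hρ.isHermitian.eigenvectorUnitary.2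
  have hA : A.IsHermitian := hH.star_mul_mul U
  have hD := star_eigenvectorUnitary_mul_mul_eigenvectorUnitary hρ.isHermitian
  refine ⟨fun K _ q η hq hq1 hη hρη => ?_, ?_⟩
  · have hens := (IsPureEnsemble.mk hq hq1 hη hρη).conj (Unitary.star_mem hU)
    rw [star_star, hD] at hens
    have hvar : ∀ k, varVec H (η k) = varVec A (star U *ᵥ η k) := fun k => by
      rw [← varVec_conj (Unitary.star_mem hU), star_star]
    simp only [QFI_eq hρ hH, hvar, hens.sum_mul_varVec]
    linarith [sum_mul_sq_re_quadForm_le hp hA hens]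
  · have hp1 : ∑ j, p j = 1 := by
      simpa [hρtr] using congrArg re hρ.isHermitian.trace_eq_sum_eigenvalues.symm
    obtain ⟨K, q, c, hK, hens, hval⟩ := exists_isPureEnsemble_sum_mul_sq_re_quadForm_eq hp hp1 hA
    have hens' := hens.conj hU
    rw [← hD, mul_star_mul_mul_mul_star hU] at hens'
    refine ⟨K, q, _, hK, hens'.pos, hens'.sum_eq_one, hens'.unit, hens'.sum_smul_vecMulVec, ?_⟩
    have hvar : ∀ k, varVec H (U *ᵥ c k) = varVec A (c k) := fun k => by
      rw [← varVec_conj hU A, mul_star_mul_mul_mul_star hU]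
    simp only [hvar, hens.sum_mul_varVec, hval]
    exact (QFI_eq hρ hH).symm

end
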